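/- Let d ≥ 1, σ > 0, c > 0, κ ≥ 0 and T > 0, and let ψ : ℝ^d → ℂ be a measurable function with Re ψ(ξ) ≥ c‖ξ‖^σ for all ξ. Then there exists a constant C > 0 such that for every t ∈ (0, T] and every g ∈ L²(ℝ^d; ℂ), the function ξ ↦ (1 + ‖ξ‖²)^κ e^{−tψ(ξ)} g(ξ) belongs to L²(ℝ^d; ℂ) and its L² norm is at most C t^{−2κ/σ} ‖g‖_{L²}. -/

import Mathlib

/-!
The modulus of the multiplier is `(1 + ‖ξ‖²)^κ e^{-t Re ψ(ξ)} ≤ (1 + r²)^κ e^{-t c r^σ}` with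
`r = ‖ξ‖`, so it suffices to bound this weight by `C t^(-2κ/σ)` uniformly in `r ≥ 0` and
`t ∈ (0, T]`; multiplication by a bounded function is then bounded on `L²`. Split
`(1 + r²)^κ ≤ 2^κ (1 + r^(2κ))`: the constant part is at most `1 ≤ (T/t)^(2κ/σ)`, and with
`x = t c r^σ` the other part is `(tc)^(-2κ/σ) x^(2κ/σ) e^{-x}`, where `x^a e^{-x}` is bounded on
`[0, ∞)`.
-/

open Set MeasureTheory
open scoped Nat

lemma rpow_le_one_add_pow {x a : ℝ} (hx : 0 ≤ x) (ha : 0 ≤ a) :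
    x ^ a ≤ 1 + x ^ ⌈a⌉₊ := by
  rcases le_total x 1 with hx1 | hx1
  · linarith [Real.rpow_le_one hx hx1 ha, pow_nonneg hx ⌈a⌉₊]
  · calc x ^ a ≤ x ^ (⌈a⌉₊ : ℝ) := Real.rpow_le_rpow_of_exponent_le hx1 (Nat.le_ceil a)
      _ ≤ 1 + x ^ ⌈a⌉₊ := by rw [Real.rpow_natCast]; linarith

lemma pow_mul_exp_neg_le_factorial {x : ℝ} (hx : 0 ≤ x) (n : ℕ) :
    x ^ n * Real.exp (-x) ≤ n ! := by
  rw [Real.exp_neg, ← div_eq_mul_inv, div_le_iff₀ (Real.exp_pos x), ← div_le_iff₀' (by positivity)]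
  exact Real.pow_div_factorial_le_exp x hx n

lemma rpow_mul_exp_neg_le {x a : ℝ} (hx : 0 ≤ x) (ha : 0 ≤ a) :
    x ^ a * Real.exp (-x) ≤ 1 + (⌈a⌉₊)! := by
  have hexp : Real.exp (-x) ≤ 1 := Real.exp_le_one_iff.mpr (neg_nonpos.mpr hx)
  calc x ^ a * Real.exp (-x) ≤ (1 + x ^ ⌈a⌉₊) * Real.exp (-x) := by
        gcongr; exact rpow_le_one_add_pow hx ha
    _ = Real.exp (-x) + x ^ ⌈a⌉₊ * Real.exp (-x) := by ring
    _ ≤ 1 + (⌈a⌉₊)! := add_le_add hexp (pow_mul_exp_neg_le_factorial hx _)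

-- Substituting `x = s r^σ` trades the power `r^b` for the factor `s^(-b/σ)`.
lemma rpow_mul_exp_neg_mul_rpow_le {r s σ b : ℝ} (hr : 0 ≤ r) (hs : 0 < s) (hσ : 0 < σ)
    (hb : 0 ≤ b) :
    r ^ b * Real.exp (-(s * r ^ σ)) ≤ (1 + (⌈b / σ⌉₊)!) * s ^ (-(b / σ)) := by
  set x := s * r ^ σ
  have hx : 0 ≤ x := by positivity
  have hrb : r ^ b = s ^ (-(b / σ)) * x ^ (b / σ) := by
    rw [Real.mul_rpow hs.le (by positivity), ← Real.rpow_mul hr, mul_div_cancel₀ b hσ.ne',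
      ← mul_assoc, ← Real.rpow_add hs, neg_add_cancel, Real.rpow_zero, one_mul]
  calc r ^ b * Real.exp (-x) = s ^ (-(b / σ)) * (x ^ (b / σ) * Real.exp (-x)) := by
        rw [hrb, mul_assoc]
    _ ≤ s ^ (-(b / σ)) * (1 + (⌈b / σ⌉₊)!) := by
        gcongr; exact rpow_mul_exp_neg_le hx (by positivity)
    _ = _ := mul_comm _ _

lemma add_rpow_le_two_rpow_mul_rpow_add_rpow {a b p : ℝ} (ha : 0 ≤ a) (hb : 0 ≤ b)
    (hp : 0 ≤ p) : (a + b) ^ p ≤ 2 ^ p * (a ^ p + b ^ p) := calc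
  (a + b) ^ p ≤ (2 * max a b) ^ p := by gcongr; linarith [le_max_left a b, le_max_right a b]
  _ = 2 ^ p * max (a ^ p) (b ^ p) := by
      rw [Real.mul_rpow zero_le_two (le_max_of_le_left ha), Real.rpow_max ha hb hp]
  _ ≤ 2 ^ p * (a ^ p + b ^ p) := by gcongr; exact max_le_add_of_nonneg (by positivity) (by positivity)

lemma one_add_sq_rpow_le {r κ : ℝ} (hr : 0 ≤ r) (hκ : 0 ≤ κ) :
    (1 + r ^ 2) ^ κ ≤ 2 ^ κ * (1 + r ^ (2 * κ)) := by
  have hsq : (r ^ 2) ^ κ = r ^ (2 * κ) := by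
    rw [← Real.rpow_natCast, ← Real.rpow_mul hr, Nat.cast_ofNat]
  simpa only [Real.one_rpow, hsq] using
    add_rpow_le_two_rpow_mul_rpow_add_rpow zero_le_one (sq_nonneg r) hκ

lemma exists_one_add_sq_rpow_mul_exp_neg_le {σ c κ T : ℝ} (hσ : 0 < σ) (hc : 0 < c)
    (hκ : 0 ≤ κ) (hT : 0 < T) :
    ∃ C > 0, ∀ t ∈ Ioc (0 : ℝ) T, ∀ r : ℝ, 0 ≤ r →
      (1 + r ^ 2) ^ κ * Real.exp (-(t * (c * r ^ σ))) ≤ C * t ^ (-(2 * κ / σ)) := by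
  set a := 2 * κ / σ
  set M : ℝ := 1 + (⌈a⌉₊)!
  refine ⟨2 ^ κ * (T ^ a + M * c ^ (-a)), by positivity, ?_⟩
  rintro t ⟨ht, htT⟩ r hr
  set E := Real.exp (-(t * (c * r ^ σ)))
  have hE : E ≤ T ^ a * t ^ (-a) := calc
    E ≤ 1 := Real.exp_le_one_iff.mpr (neg_nonpos.mpr (by positivity))
    _ ≤ (T / t) ^ a := Real.one_le_rpow ((one_le_div ht).mpr htT) (by positivity)
    _ = T ^ a * t ^ (-a) := by
        rw [Real.div_rpow hT.le ht.le, Real.rpow_neg ht.le, div_eq_mul_inv]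
  have hpowE : r ^ (2 * κ) * E ≤ M * c ^ (-a) * t ^ (-a) := calc
    r ^ (2 * κ) * E ≤ M * (t * c) ^ (-a) := by
        simpa only [mul_assoc] using
          rpow_mul_exp_neg_mul_rpow_le hr (mul_pos ht hc) hσ (by positivity : 0 ≤ 2 * κ)
    _ = M * c ^ (-a) * t ^ (-a) := by rw [Real.mul_rpow ht.le hc.le]; ring
  calc (1 + r ^ 2) ^ κ * E ≤ 2 ^ κ * (1 + r ^ (2 * κ)) * E := by
        gcongr; exact one_add_sq_rpow_le hr hκ
    _ = 2 ^ κ * (E + r ^ (2 * κ) * E) := by ring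
    _ ≤ 2 ^ κ * (T ^ a * t ^ (-a) + M * c ^ (-a) * t ^ (-a)) := by gcongr
    _ = 2 ^ κ * (T ^ a + M * c ^ (-a)) * t ^ (-a) := by ring

lemma MemLp.bounded_mul_and_eLpNorm_le {α 𝕜 : Type*} [MeasurableSpace α] {μ : Measure α}
    {p : ENNReal} [NormedRing 𝕜] {m g : α → 𝕜} {K : ℝ} (hg : MemLp g p μ)
    (hm : AEStronglyMeasurable m μ) (hmK : ∀ x, ‖m x‖ ≤ K) :
    MemLp (fun x => m x * g x) p μ ∧
      eLpNorm (fun x => m x * g x) p μ ≤ ENNReal.ofReal K * eLpNorm g p μ := by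
  have hmg : ∀ᵐ x ∂μ, ‖m x * g x‖ ≤ K * ‖g x‖ := Filter.Eventually.of_forall fun x =>
    (norm_mul_le _ _).trans (mul_le_mul_of_nonneg_right (hmK x) (norm_nonneg _))
  exact ⟨hg.of_le_mul (hm.mul hg.1) hmg, eLpNorm_le_mul_eLpNorm_of_ae_le_mul hmg p⟩

theorem multiplier_L2_estimate_general (d : ℕ) (σ c κ T : ℝ)
    (hσ : 0 < σ) (hc : 0 < c) (hκ : 0 ≤ κ) (hT : 0 < T)
    (ψ : EuclideanSpace ℝ (Fin d) → ℂ) (hψmeas : Measurable ψ)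
    (hψ : ∀ ξ, c * ‖ξ‖ ^ σ ≤ (ψ ξ).re) :
    ∃ C : ℝ, 0 < C ∧
      ∀ t ∈ Ioc (0 : ℝ) T, ∀ g : EuclideanSpace ℝ (Fin d) → ℂ,
        MemLp g 2 volume →
          MemLp (fun ξ => (((1 + ‖ξ‖ ^ 2) ^ κ : ℝ) : ℂ) *
              Complex.exp (-(t : ℂ) * ψ ξ) * g ξ) 2 volume ∧
          eLpNorm (fun ξ => (((1 + ‖ξ‖ ^ 2) ^ κ : ℝ) : ℂ) *
              Complex.exp (-(t : ℂ) * ψ ξ) * g ξ) 2 volume ≤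
            ENNReal.ofReal (C * t ^ (-(2 * κ / σ))) * eLpNorm g 2 volume := by
  obtain ⟨C, hC, hweight⟩ := exists_one_add_sq_rpow_mul_exp_neg_le hσ hc hκ hT
  refine ⟨C, hC, fun t ht g hg => MemLp.bounded_mul_and_eLpNorm_le hg (by fun_prop) fun ξ => ?_⟩
  rw [norm_mul, Complex.norm_real, Complex.norm_exp, Real.norm_of_nonneg (by positivity)]
  calc (1 + ‖ξ‖ ^ 2) ^ κ * Real.exp (-(t : ℂ) * ψ ξ).re
      ≤ (1 + ‖ξ‖ ^ 2) ^ κ * Real.exp (-(t * (c * ‖ξ‖ ^ σ))) := by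
        gcongr
        simpa using mul_le_mul_of_nonneg_left (hψ ξ) ht.1.le
    _ ≤ C * t ^ (-(2 * κ / σ)) := hweight t ht _ (norm_nonneg ξ)

/-- Fourier-side form of the semigroup smoothing estimate in `L²`: if
`Re ψ(ξ) ≥ c ‖ξ‖^σ`, then the multiplier `(1 + ‖ξ‖²)^κ e^{-tψ(ξ)}` maps `L²` to `L²`
with norm at most `C t^(-2κ/σ)` for `t ∈ (0, T]`. -/
theorem multiplier_L2_estimate (d : ℕ) (hd : 1 ≤ d) (σ c κ T : ℝ)
    (hσ : 0 < σ) (hc : 0 < c) (hκ : 0 ≤ κ) (hT : 0 < T)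
    (ψ : EuclideanSpace ℝ (Fin d) → ℂ) (hψmeas : Measurable ψ)
    (hψ : ∀ ξ, c * ‖ξ‖ ^ σ ≤ (ψ ξ).re) :
    ∃ C : ℝ, 0 < C ∧
      ∀ t ∈ Ioc (0 : ℝ) T, ∀ g : EuclideanSpace ℝ (Fin d) → ℂ,
        MemLp g 2 volume →
          MemLp (fun ξ => (((1 + ‖ξ‖ ^ 2) ^ κ : ℝ) : ℂ) *
              Complex.exp (-(t : ℂ) * ψ ξ) * g ξ) 2 volume ∧
          eLpNorm (fun ξ => (((1 + ‖ξ‖ ^ 2) ^ κ : ℝ) : ℂ) *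
              Complex.exp (-(t : ℂ) * ψ ξ) * g ξ) 2 volume ≤
            ENNReal.ofReal (C * t ^ (-(2 * κ / σ))) * eLpNorm g 2 volume :=
  multiplier_L2_estimate_general d σ c κ T hσ hc hκ hT ψ hψmeas hψ
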